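/- arXiv:2003.08842 — 4 statements merged into one kernel-verified Lean document; each statement's English description precedes it below -/
import Mathlib

section
/- Let 1 ≤ k ≤ n and let f : [k−1] → [n] be a monomorphism in the simplex category Δ (equivalently, an injective order-preserving map). Then the number of sequences I ∈ D(k,n) with d_I = f is exactly (n−k+1)!. (This is the count of the (n−k+1)! ways of decomposing a composite face map, i.e., the vertex count of the corresponding face-map polyhedron.) -/
open CategoryTheory

/-- The composite coface map `δ_{i_{m+1+ℓ}} ∘ ⋯ ∘ δ_{i_{m+1}} : [m] ⟶ [m+1+ℓ]` in the
simplex category, built from a family of indices `I j : Fin (j+1)`. -/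
def dComp (I : ∀ j : ℕ, Fin (j + 1)) (m : ℕ) :
    ∀ ℓ : ℕ, (SimplexCategory.mk m ⟶ SimplexCategory.mk (m + 1 + ℓ))
  | 0 => SimplexCategory.δ (I (m + 1))
  | (ℓ + 1) => dComp I m ℓ ≫ SimplexCategory.δ (I (m + 1 + ℓ + 1))

/-- An element of `D(k,n)`: a sequence `(i_k, i_{k+1}, …, i_n)` with `0 ≤ i_j ≤ j`.
The index `t : Fin (n - k + 1)` corresponds to `j = k + t`, and the entry `i_j` is an
element of `Fin (j + 1)`, i.e. `0 ≤ i_j ≤ j`. -/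
abbrev DSeq (k n : ℕ) := ∀ t : Fin (n - k + 1), Fin (k + t + 1)

/-- Extend an element of `D(k,n)` to a globally defined family of indices (with junk
value `0` outside the window `k ≤ j ≤ n`). -/
def DSeq.pad {k n : ℕ} (I : DSeq k n) (j : ℕ) : Fin (j + 1) :=
  if h : k ≤ j ∧ j ≤ n then
    have h1 : j - k < n - k + 1 := by omega
    Fin.cast (by simp only [Fin.val_mk]; omega) (I ⟨j - k, h1⟩)
  else 0

/-- The composite coface map `d_I = δ_{i_n} ∘ ⋯ ∘ δ_{i_k} : [k-1] ⟶ [n]` associated to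
`I ∈ D(k,n)`, for `1 ≤ k ≤ n`. -/
def dOf (k n : ℕ) (hk : 1 ≤ k) (hkn : k ≤ n) (I : DSeq k n) :
    (SimplexCategory.mk (k - 1) ⟶ SimplexCategory.mk n) :=
  dComp I.pad (k - 1) (n - k) ≫
    eqToHom (congrArg SimplexCategory.mk (by omega : k - 1 + 1 + (n - k) = n))

/-! The last coface `δ_{i_n}` of a factorization of a monomorphism `f : [k-1] ⟶ [n]` must omit a
vertex outside the image of `f`; there are `n - k + 1` such vertices `a`, and for each of them `f`
factors uniquely as `g ≫ δ_a` with `g : [k-1] ⟶ [n-1]` again a monomorphism. Induction on `n - k`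
gives `(n - k + 1) * (n - k)! = (n - k + 1)!` factorizations. -/

open Simplicial

namespace SimplexCategory

lemma card_compl_range_of_mono {Δ : SimplexCategory} {n : ℕ} (f : Δ ⟶ ⦋n⦌) [Mono f] :
    Fintype.card ↑(Set.range f.toOrderHom)ᶜ = n - Δ.len := by
  classical
  rw [Fintype.card_compl_set, Set.card_range_of_injective (mono_iff_injective.mp ‹_›)]
  simp

lemma comp_δ_ne_of_mem_range {Δ : SimplexCategory} {n : ℕ} {f : Δ ⟶ ⦋n + 1⦌} {a : Fin (n + 2)}
    (ha : a ∈ Set.range f.toOrderHom) (g : Δ ⟶ ⦋n⦌) : g ≫ δ a ≠ f := by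
  rintro rfl
  obtain ⟨x, hx⟩ := ha
  exact Fin.succAbove_ne a _ hx

section Fibers

variable {Δ : SimplexCategory} {n : ℕ} {X : Type*} (φ : X → (Δ ⟶ ⦋n⦌)) {c : ℕ}
  (hφ : ∀ g : Δ ⟶ ⦋n⦌, Mono g → Nat.card {x // φ x = g} = c) (f : Δ ⟶ ⦋n + 1⦌) [Mono f]
include hφ

lemma card_fiber_comp_δ (a : Fin (n + 2)) :
    Nat.card {x // φ x ≫ δ a = f} = if a ∈ Set.range f.toOrderHom then 0 else c := by
  split_ifs with ha
  · exact Nat.card_eq_zero.mpr (Or.inl ⟨fun x => comp_δ_ne_of_mem_range ha _ x.2⟩)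
  · obtain ⟨g, rfl⟩ := eq_comp_δ_of_not_surjective' f a fun x hx => ha ⟨x, hx⟩
    have : Mono g := mono_of_mono g (δ a)
    simpa only [cancel_mono] using hφ g this

lemma card_fiber_prod_comp_δ [Finite X] :
    Nat.card {p : Fin (n + 2) × X // φ p.2 ≫ δ p.1 = f} = (n + 1 - Δ.len) * c := by
  classical
  rw [Nat.card_congr (Equiv.subtypeProdEquivSigmaSubtype fun a x => φ x ≫ δ a = f),
    Nat.card_sigma]
  simp only [card_fiber_comp_δ φ hφ f, Finset.sum_ite, Finset.sum_const_zero, Finset.sum_const,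
    zero_add, smul_eq_mul]
  rw [← card_compl_range_of_mono f, Fintype.card_subtype]
  rfl

end Fibers

/-- `D(m + 1, m + 1 + ℓ)` indexed from `0`: entry `t` is `i_{m+1+t}`. -/
abbrev CofaceSeq (m ℓ : ℕ) := ∀ t : Fin (ℓ + 1), Fin (m + 1 + t + 1)

def CofaceSeq.comp {m ℓ : ℕ} (I : CofaceSeq m ℓ) : ⦋m⦌ ⟶ ⦋m + 1 + ℓ⦌ :=
  match ℓ, I with
  | 0, I => δ (I 0)
  | _ + 1, I => comp (Fin.init I) ≫ δ (I (Fin.last _))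

theorem CofaceSeq.card_fiber_comp {m ℓ : ℕ} (f : ⦋m⦌ ⟶ ⦋m + 1 + ℓ⦌) [Mono f] :
    Nat.card {I : CofaceSeq m ℓ // I.comp = f} = (ℓ + 1).factorial := by
  induction ℓ with
  | zero =>
    obtain ⟨a, rfl⟩ := eq_δ_of_mono f
    calc Nat.card {I : CofaceSeq m 0 // I.comp = δ a}
        = Nat.card {b // δ b = δ a} :=
          Nat.card_congr <| (Equiv.piUnique fun t : Fin 1 => Fin (m + 1 + t + 1)).subtypeEquiv
            fun _ => Iff.rfl
      _ = 1 := by simp [δ_injective.eq_iff]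
  | succ ℓ ih =>
    calc Nat.card {I : CofaceSeq m (ℓ + 1) // I.comp = f}
        = Nat.card {p : Fin (m + 1 + ℓ + 2) × CofaceSeq m ℓ // p.2.comp ≫ δ p.1 = f} :=
          Nat.card_congr <| (Fin.snocEquiv _).symm.subtypeEquiv fun _ => Iff.rfl
      _ = (m + 1 + ℓ + 1 - m) * (ℓ + 1).factorial :=
          card_fiber_prod_comp_δ _ (fun g _ => ih g) f
      _ = (ℓ + 1 + 1).factorial := by
          rw [Nat.factorial_succ (ℓ + 1)]
          congr 1
          omega

end SimplexCategory

open SimplexCategory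

lemma dComp_eq_cofaceSeq_comp (I : ∀ j : ℕ, Fin (j + 1)) (m ℓ : ℕ) :
    dComp I m ℓ = CofaceSeq.comp fun t : Fin (ℓ + 1) => I (m + 1 + t) := by
  induction ℓ with
  | zero => rfl
  | succ ℓ ih => rw [dComp, ih]; rfl

lemma DSeq.val_pad_add {k n : ℕ} (hkn : k ≤ n) (I : DSeq k n) (t : Fin (n - k + 1)) :
    (I.pad (k + t) : ℕ) = I t := by
  have ht : (⟨k + t - k, by omega⟩ : Fin (n - k + 1)) = t := Fin.ext (Nat.add_sub_cancel_left ..)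
  rw [DSeq.pad, dif_pos ⟨Nat.le_add_right .., by omega⟩, Fin.val_cast, ht]

/-- For `1 ≤ k ≤ n` and a monomorphism `f : [k-1] ⟶ [n]` in the simplex category,
the number of sequences `I ∈ D(k,n)` with `d_I = f` is exactly `(n - k + 1)!`. -/
theorem card_fiber_dOf (k n : ℕ) (hk : 1 ≤ k) (hkn : k ≤ n)
    (f : SimplexCategory.mk (k - 1) ⟶ SimplexCategory.mk n) (hf : Mono f) :
    Nat.card {I : DSeq k n // dOf k n hk hkn I = f} = Nat.factorial (n - k + 1) := by
  have hk' : k - 1 + 1 = k := Nat.sub_add_cancel hk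
  have hn : k - 1 + 1 + (n - k) = n := by omega
  let e : DSeq k n ≃ CofaceSeq (k - 1) (n - k) := Equiv.piCongrRight fun t => finCongr (by omega)
  have hfiber (I : DSeq k n) :
      dOf k n hk hkn I = f ↔ (e I).comp = f ≫ eqToHom (congrArg mk hn.symm) := by
    have hpad : (fun t : Fin (n - k + 1) => I.pad (k - 1 + 1 + t)) = e I := by
      ext t
      simp only [e, Equiv.piCongrRight_apply, Pi.map_apply, finCongr_apply, Fin.val_cast]
      rw [hk', DSeq.val_pad_add hkn]
    rw [dOf, comp_eqToHom_iff, dComp_eq_cofaceSeq_comp, hpad]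
  rw [Nat.card_congr (e.subtypeEquiv (q := fun J => J.comp = _) hfiber),
    CofaceSeq.card_fiber_comp]
end

section
/- For real numbers 0 < a_0 < a_1 < ⋯ < a_n, the set of extreme points of the permutohedron P(a) is exactly the set V(a) of permuted points, and V(a) has exactly (n+1)! elements; in particular P(a) has (n+1)! vertices. -/
/-!
All permuted points `(a_{σ(0)}, …, a_{σ(n)})` have the same Euclidean norm, so they lie on a
sphere. Euclidean space is strictly convex, so every point of that sphere is an extreme point
of the enclosing closed ball, hence of any convex subset of the ball containing it, such as the
convex hull. Distinct `a_i` make `σ ↦ (a_{σ(i)})_i` injective, giving `(n+1)!` points.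
-/

/-- The vertex set `V(a)` of the permutohedron: all points
`(a_{σ(0)}, …, a_{σ(n)}) ∈ ℝ^{n+1}` for permutations `σ` of `{0, …, n}`. -/
def permVertices (n : ℕ) (a : Fin (n + 1) → ℝ) : Set (EuclideanSpace ℝ (Fin (n + 1))) :=
  {x | ∃ σ : Equiv.Perm (Fin (n + 1)), ∀ i, x i = a (σ i)}

open Metric

theorem extremePoints_convexHull_eq_of_subset_sphere {E : Type*} [NormedAddCommGroup E]
    [NormedSpace ℝ E] [StrictConvexSpace ℝ E] {s : Set E} {c : E} {r : ℝ}
    (hs : s ⊆ sphere c r) : Set.extremePoints ℝ (convexHull ℝ s) = s := by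
  refine extremePoints_convexHull_subset.antisymm fun x hx => ?_
  rcases eq_or_ne r 0 with rfl | hr
  · have hsx : s = {x} := by
      rw [sphere_zero] at hs
      exact (Set.subsingleton_singleton.anti hs).eq_singleton_of_mem hx
    simp [hsx]
  · have hball : convexHull ℝ s ⊆ closedBall c r :=
      convexHull_min (hs.trans sphere_subset_closedBall) (convex_closedBall c r)
    exact inter_extremePoints_subset_extremePoints_of_subset hball
      ⟨subset_convexHull ℝ s hx,
        StrictConvexSpace.sphere_subset_extremePoints_closedBall c hr (hs hx)⟩

theorem permVertices_eq_range (n : ℕ) (a : Fin (n + 1) → ℝ) :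
    permVertices n a = Set.range fun σ : Equiv.Perm (Fin (n + 1)) =>
      (WithLp.toLp 2 (a ∘ σ) : EuclideanSpace ℝ (Fin (n + 1))) := by
  ext x
  constructor
  · rintro ⟨σ, hσ⟩
    exact ⟨σ, by ext i; exact (hσ i).symm⟩
  · rintro ⟨σ, rfl⟩
    exact ⟨σ, fun _ => rfl⟩

theorem permVertices_subset_sphere (n : ℕ) (a : Fin (n + 1) → ℝ) :
    permVertices n a ⊆ sphere 0 ‖(WithLp.toLp 2 a : EuclideanSpace ℝ (Fin (n + 1)))‖ := by
  rw [permVertices_eq_range]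
  rintro _ ⟨σ, rfl⟩
  rw [mem_sphere_zero_iff_norm, EuclideanSpace.norm_eq, EuclideanSpace.norm_eq]
  exact congrArg Real.sqrt (Equiv.sum_comp σ fun i => ‖a i‖ ^ 2)

theorem card_permVertices (n : ℕ) {a : Fin (n + 1) → ℝ} (ha : Function.Injective a) :
    Nat.card (permVertices n a) = (n + 1).factorial := by
  have hinj : Function.Injective fun σ : Equiv.Perm (Fin (n + 1)) =>
      (WithLp.toLp 2 (a ∘ σ) : EuclideanSpace ℝ (Fin (n + 1))) :=
    fun σ τ h => Equiv.ext fun i => ha (congrArg (fun x => x i) h)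
  rw [permVertices_eq_range, Nat.card_range_of_injective hinj, Nat.card_perm, Nat.card_fin]

theorem extremePoints_permutohedron_general (n : ℕ) (a : Fin (n + 1) → ℝ)
    (ha : StrictMono a) :
    Set.extremePoints ℝ (convexHull ℝ (permVertices n a)) = permVertices n a ∧
      Nat.card ↥(permVertices n a) = Nat.factorial (n + 1) :=
  ⟨extremePoints_convexHull_eq_of_subset_sphere (permVertices_subset_sphere n a),
    card_permVertices n ha.injective⟩

/-- For real numbers `0 < a_0 < a_1 < ⋯ < a_n`, the set of extreme points of the
permutohedron `P(a) = convexHull (V(a))` is exactly `V(a)`, and `V(a)` has exactly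
`(n+1)!` elements; in particular `P(a)` has `(n+1)!` vertices. -/
theorem extremePoints_permutohedron (n : ℕ) (a : Fin (n + 1) → ℝ)
    (h0 : 0 < a 0) (ha : StrictMono a) :
    Set.extremePoints ℝ (convexHull ℝ (permVertices n a)) = permVertices n a ∧
      Nat.card ↥(permVertices n a) = Nat.factorial (n + 1) :=
  extremePoints_permutohedron_general n a ha
end

section
/- Let I, J be disjoint finite sets of nonnegative integers and let r be a nonnegative integer such that either r ∈ I and r+1 ∈ J, or r+1 ∈ I and r ∈ J. Let I′ and J′ be obtained from I and J by exchanging the two elements r and r+1 between the two sets (leaving all other elements unchanged). Then sgn(I′, J′) = −sgn(I, J). -/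
/-!
For disjoint `I` and `J`, `sgnSet I J` is `(-1)` to the number of inversions, pairs
`(i, j) ∈ I × J` with `j < i`. Moving `r` and `r + 1` across changes no comparison with any
other element, since nothing lies strictly between them; the only change is the pair
`{r, r + 1}`, an inversion exactly when `r + 1 ∈ I` and `r ∈ J`.
-/

/-- The sign `sgn(I,J)` of a pair of finite sets of nonnegative integers:
`sgn(I,J) = (-1)^m` where `m` is the number of pairs `(i,j) ∈ (I∖J) × (J∖I)` with
`i > j`.  For disjoint `I` and `J` this is the sign of the permutation of
`|I| + |J|` letters rearranging the concatenation of the increasing enumerations of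
`I` and `J` into the increasing enumeration of `I ∪ J`, and in general
`sgn(I,J) = sgn(I∖J, J∖I)`. -/
def sgnSet (I J : Finset ℕ) : ℤ :=
  (-1) ^ (((I \ J) ×ˢ (J \ I)).filter fun p => p.2 < p.1).card

open Finset

section LinearOrder

variable {α : Type*} [LinearOrder α]

def inversions (I J : Finset α) : ℕ := #{p ∈ I ×ˢ J | p.2 < p.1}

lemma inversions_eq_sum (I J : Finset α) :
    inversions I J = ∑ i ∈ I, #{j ∈ J | j < i} := by
  rw [inversions, card_filter, sum_product]
  exact sum_congr rfl fun i _ => (card_filter _ _).symm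

lemma card_filter_lt_insert {J : Finset α} {a : α} (ha : a ∉ J) (i : α) :
    #{j ∈ insert a J | j < i} = #{j ∈ J | j < i} + if a < i then 1 else 0 := by
  rw [filter_insert]
  split_ifs
  · exact card_insert_of_notMem fun h => ha (mem_filter.mp h).1
  · rfl

end LinearOrder

lemma sgnSet_of_disjoint {I J : Finset ℕ} (hd : Disjoint I J) :
    sgnSet I J = (-1) ^ inversions I J := by
  rw [sgnSet, sdiff_eq_self_of_disjoint hd, sdiff_eq_self_of_disjoint hd.symm, inversions]

lemma inversions_insert_swap_adjacent {I J : Finset ℕ} {r : ℕ} (hrI : r ∉ I)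
    (hr1I : r + 1 ∉ I) (hrJ : r ∉ J) (hr1J : r + 1 ∉ J) :
    inversions (insert (r + 1) I) (insert r J)
      = inversions (insert r I) (insert (r + 1) J) + 1 := by
  have below_succ : #{j ∈ J | j < r + 1} = #{j ∈ J | j < r} :=
    congrArg card <| filter_congr fun j hj => by
      have := ne_of_mem_of_not_mem hj hrJ
      omega
  have on_I : ∀ i ∈ I, (if r < i then 1 else 0) = if r + 1 < i then 1 else 0 := by
    intro i hi
    have := ne_of_mem_of_not_mem hi hr1I
    split_ifs <;> omega
  simp only [inversions_eq_sum, sum_insert hr1I, sum_insert hrI, card_filter_lt_insert hrJ,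
    card_filter_lt_insert hr1J, sum_add_distrib, sum_congr rfl on_I, below_succ]
  rw [if_pos r.lt_succ_self, if_neg r.not_succ_lt_self]
  ring

lemma sgnSet_insert_swap_adjacent {I J : Finset ℕ} (hd : Disjoint I J) {r : ℕ} (hrI : r ∉ I)
    (hr1I : r + 1 ∉ I) (hrJ : r ∉ J) (hr1J : r + 1 ∉ J) :
    sgnSet (insert (r + 1) I) (insert r J) = -sgnSet (insert r I) (insert (r + 1) J) := by
  rw [sgnSet_of_disjoint (by simp [hd, hrI, hr1J]), sgnSet_of_disjoint (by simp [hd, hr1I, hrJ]),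
    inversions_insert_swap_adjacent hrI hr1I hrJ hr1J, pow_succ, mul_neg_one]

/-- Let `I, J` be disjoint finite sets of nonnegative integers and `r` a nonnegative
integer such that either `r ∈ I` and `r+1 ∈ J`, or `r+1 ∈ I` and `r ∈ J`.  If `I′, J′`
are obtained from `I, J` by exchanging the two elements `r` and `r+1` between the two
sets (leaving all other elements unchanged), then `sgn(I′,J′) = -sgn(I,J)`. -/
theorem sgnSet_swap_adjacent (I J I' J' : Finset ℕ) (hd : Disjoint I J) (r : ℕ)
    (h : (r ∈ I ∧ r + 1 ∈ J ∧ I' = insert (r + 1) (I.erase r) ∧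
            J' = insert r (J.erase (r + 1))) ∨
         (r + 1 ∈ I ∧ r ∈ J ∧ I' = insert r (I.erase (r + 1)) ∧
            J' = insert (r + 1) (J.erase r))) :
    sgnSet I' J' = -sgnSet I J := by
  have hd₀ {a b : ℕ} : Disjoint (I.erase a) (J.erase b) :=
    hd.mono (erase_subset _ _) (erase_subset _ _)
  have notMem_I {a b : ℕ} (hb : b ∈ J) : b ∉ I.erase a := fun h =>
    disjoint_left.mp hd (mem_of_mem_erase h) hb
  have notMem_J {a b : ℕ} (hb : b ∈ I) : b ∉ J.erase a := fun h =>
    disjoint_right.mp hd (mem_of_mem_erase h) hb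
  rcases h with ⟨hrI, hr1J, rfl, rfl⟩ | ⟨hr1I, hrJ, rfl, rfl⟩
  · conv_rhs => rw [← insert_erase hrI, ← insert_erase hr1J]
    exact sgnSet_insert_swap_adjacent hd₀ (notMem_erase _ _) (notMem_I hr1J) (notMem_J hrI)
      (notMem_erase _ _)
  · conv_rhs => rw [← insert_erase hr1I, ← insert_erase hrJ]
    rw [sgnSet_insert_swap_adjacent hd₀ (notMem_I hrJ) (notMem_erase _ _) (notMem_erase _ _)
      (notMem_J hr1I), neg_neg]
end

section
/- Let k ≥ 1 and let C = [0,1]^k ⊆ ℝ^k be the unit cube, with ∂₊C = {x ∈ C : x_i = 1 for some i} and ∂₋C = {x ∈ C : x_i = 0 for some i}. Then there is a homeomorphism from ∂₊C (with the subspace topology) onto the closed unit ball of Euclidean (k−1)-space that carries ∂₊C ∩ ∂₋C onto the unit sphere S^{k−2}. In particular, collapsing ∂₊C ∩ ∂₋C inside ∂₊C yields a (k−1)-sphere. -/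
/-- The unit cube `C = [0,1]^k ⊆ ℝ^k`. -/
def unitCube (k : ℕ) : Set (EuclideanSpace ℝ (Fin k)) :=
  {x | ∀ i, x i ∈ Set.Icc (0 : ℝ) 1}

/-- The union `∂₊C` of the top faces of the unit cube: points of `C` with some
coordinate equal to `1`. -/
def cubeTop (k : ℕ) : Set (EuclideanSpace ℝ (Fin k)) :=
  {x ∈ unitCube k | ∃ i, x i = 1}

/-- The union `∂₋C` of the bottom faces of the unit cube: points of `C` with some
coordinate equal to `0`. -/
def cubeBot (k : ℕ) : Set (EuclideanSpace ℝ (Fin k)) :=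
  {x ∈ unitCube k | ∃ i, x i = 0}

/-! Radial projection `x ↦ x / ∑ xᵢ` maps `∂₊C` bijectively onto the standard simplex
`{p ≥ 0, ∑ pᵢ = 1}`, because `∂₊C` meets every ray of the closed positive orthant exactly once
(its points are the nonzero `x ≥ 0` with `max xᵢ = 1`); a point lies in `∂₋C` exactly when its
image has a vanishing coordinate. Reading these coordinates as barycentric coordinates for an
affine basis of `ℝ^(k-1)` turns the standard simplex into a compact convex body with nonempty
interior whose frontier is the union of its facets, and gauge rescaling maps such a body onto the
closed unit ball, frontier onto sphere. -/

open Set Metric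

theorem Set.BijOn.exists_homeomorph {X Y : Type*} [TopologicalSpace X] [TopologicalSpace Y]
    [T2Space Y] {f : X → Y} {s : Set X} {t : Set Y} (h : BijOn f s t) (hf : ContinuousOn f s)
    (hs : IsCompact s) : ∃ e : s ≃ₜ t, ∀ x, (e x : Y) = f x := by
  have := isCompact_iff_compactSpace.mp hs
  exact ⟨Continuous.homeoOfEquivCompactToT2 (f := h.equiv f) (hf.mapsToRestrict h.mapsTo),
    fun _ => rfl⟩

theorem Convex.exists_homeomorph_closedBall {E : Type*} [NormedAddCommGroup E] [NormedSpace ℝ E]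
    {s : Set E} (hc : Convex ℝ s) (hs : IsClosed s) (hne : (interior s).Nonempty)
    (hb : Bornology.IsBounded s) :
    ∃ g : s ≃ₜ closedBall (0 : E) 1, ∀ x : s, (x : E) ∈ frontier s ↔ (g x : E) ∈ sphere 0 1 := by
  obtain ⟨h, -, hcl, hfr⟩ := exists_homeomorph_image_interior_closure_frontier_eq_unitBall hc hne hb
  rw [hs.closure_eq] at hcl
  refine ⟨(h.image s).trans (Homeomorph.setCongr hcl), fun x => ?_⟩
  change (x : E) ∈ frontier s ↔ h x ∈ sphere 0 1
  rw [← hfr, h.injective.mem_set_image]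

theorem AffineBasis.mem_frontier_convexHull_iff {ι E : Type*} [Finite ι] [NormedAddCommGroup E]
    [NormedSpace ℝ E] (b : AffineBasis ι ℝ E) {x : E} (hx : x ∈ convexHull ℝ (range b)) :
    x ∈ frontier (convexHull ℝ (range b)) ↔ ∃ i, b.coord i x = 0 := by
  rw [((finite_range b).isClosed_convexHull ℝ).frontier_eq, mem_sdiff, and_iff_right hx,
    b.interior_convexHull]
  rw [b.convexHull_eq_nonneg_coord] at hx
  simp only [mem_ofPred_eq, not_forall, not_lt]
  exact exists_congr fun i => (hx i).ge_iff_eq'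

variable {k : ℕ}

theorem isCompact_cubeTop (k : ℕ) : IsCompact (cubeTop k) := by
  have hcube : IsCompact (unitCube k) := by
    have : unitCube k = EuclideanSpace.equiv (Fin k) ℝ ⁻¹' Icc 0 1 := by
      ext x
      simp [unitCube, Pi.le_def, forall_and]
    rw [this]
    exact (EuclideanSpace.equiv (Fin k) ℝ).toHomeomorph.isCompact_preimage.mpr isCompact_Icc
  have htop : IsClosed (⋃ i, {x : EuclideanSpace ℝ (Fin k) | x i = 1}) :=
    isClosed_iUnion_of_finite fun i => isClosed_eq (by fun_prop) continuous_const
  convert hcube.inter_right htop using 1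
  ext x
  simp [cubeTop]

theorem one_le_sum_of_mem_cubeTop {x : EuclideanSpace ℝ (Fin k)} (hx : x ∈ cubeTop k) :
    1 ≤ ∑ i, x i := by
  obtain ⟨hx, i, hi⟩ := hx
  exact hi ▸ Finset.single_le_sum (fun j _ => (hx j).1) (Finset.mem_univ i)

theorem eq_of_mem_cubeTop_of_forall_div_sum_eq {x y : EuclideanSpace ℝ (Fin k)}
    (hx : x ∈ cubeTop k) (hy : y ∈ cubeTop k) (h : ∀ i, x i / ∑ j, x j = y i / ∑ j, y j) :
    x = y := by
  have hSx := one_le_sum_of_mem_cubeTop hx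
  have hSy := one_le_sum_of_mem_cubeTop hy
  set c := (∑ j, x j) / ∑ j, y j
  have hxy : ∀ i, x i = c * y i := fun i => by
    have := h i
    simp only [c]
    field_simp at this ⊢
    linarith
  obtain ⟨hxC, i, hxi⟩ := hx
  obtain ⟨hyC, j, hyj⟩ := hy
  have hc_le : c ≤ 1 := by
    have := hxy j
    rw [hyj, mul_one] at this
    linarith [(hxC j).2]
  have hc_ge : 1 ≤ c := by
    have := hxy i
    rw [hxi] at this
    have hc0 : 0 ≤ c := div_nonneg (by linarith) (by linarith)
    nlinarith [mul_le_mul_of_nonneg_left (hyC i).2 hc0]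
  ext i
  rw [hxy i, le_antisymm hc_le hc_ge, one_mul]

theorem exists_mem_cubeTop_forall_div_sum_eq {p : Fin k → ℝ} (hp : ∀ i, 0 ≤ p i)
    (hp1 : ∑ i, p i = 1) : ∃ x ∈ cubeTop k, ∀ i, x i / ∑ j, x j = p i := by
  obtain ⟨i, -, hi⟩ := Finset.exists_max_image Finset.univ p
    (Finset.nonempty_of_sum_ne_zero (hp1 ▸ one_ne_zero))
  have hpi : 0 < p i := by
    by_contra! h
    have : ∑ j, p j ≤ 0 := Finset.sum_nonpos fun j _ => (hi j (Finset.mem_univ j)).trans h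
    linarith
  refine ⟨WithLp.toLp 2 fun j => p j / p i, ⟨fun j => ⟨?_, ?_⟩, i, ?_⟩, fun j => ?_⟩
  · exact div_nonneg (hp j) hpi.le
  · exact (div_le_one hpi).mpr (hi j (Finset.mem_univ j))
  · exact div_self hpi.ne'
  · rw [← Finset.sum_div, hp1]
    field_simp

namespace AffineBasis

variable {E : Type*} [NormedAddCommGroup E] [NormedSpace ℝ E] (b : AffineBasis (Fin k) ℝ E)

noncomputable def cubeTopToSimplex (x : EuclideanSpace ℝ (Fin k)) : E :=
  Finset.univ.affineCombination ℝ b fun i => x i / ∑ j, x j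

theorem coord_cubeTopToSimplex {x : EuclideanSpace ℝ (Fin k)} (hx : x ∈ cubeTop k) (i : Fin k) :
    b.coord i (cubeTopToSimplex b x) = x i / ∑ j, x j := by
  refine b.coord_apply_combination_of_mem (Finset.mem_univ i) ?_
  rw [← Finset.sum_div, div_self]
  linarith [one_le_sum_of_mem_cubeTop hx]

theorem continuousOn_cubeTopToSimplex : ContinuousOn (cubeTopToSimplex b) (cubeTop k) := by
  have : FiniteDimensional ℝ E := b.finiteDimensional
  refine (AffineMap.continuous_of_finiteDimensional (𝕜 := ℝ) (PE := Fin k → ℝ)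
    (Finset.univ.affineCombination ℝ b)).comp_continuousOn (continuousOn_pi.mpr fun i => ?_)
  exact (Continuous.continuousOn (by fun_prop)).div (Continuous.continuousOn (by fun_prop))
    fun x hx => by linarith [one_le_sum_of_mem_cubeTop hx]

theorem bijOn_cubeTopToSimplex :
    BijOn (cubeTopToSimplex b) (cubeTop k) (convexHull ℝ (range b)) := by
  rw [b.convexHull_eq_nonneg_coord]
  refine ⟨fun x hx i => ?_, fun x hx y hy hxy => ?_, fun u hu => ?_⟩
  · rw [b.coord_cubeTopToSimplex hx]
    exact div_nonneg (hx.1 i).1 (by linarith [one_le_sum_of_mem_cubeTop hx])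
  · refine eq_of_mem_cubeTop_of_forall_div_sum_eq hx hy fun i => ?_
    rw [← b.coord_cubeTopToSimplex hx, ← b.coord_cubeTopToSimplex hy, hxy]
  · obtain ⟨x, hx, hxu⟩ := exists_mem_cubeTop_forall_div_sum_eq hu (b.sum_coord_apply_eq_one u)
    exact ⟨x, hx, b.ext_elem fun i => by rw [b.coord_cubeTopToSimplex hx, hxu]⟩

theorem mem_cubeBot_iff_cubeTopToSimplex_mem_frontier {x : EuclideanSpace ℝ (Fin k)}
    (hx : x ∈ cubeTop k) :
    x ∈ cubeBot k ↔ cubeTopToSimplex b x ∈ frontier (convexHull ℝ (range b)) := by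
  have hS : ∑ j, x j ≠ 0 := by linarith [one_le_sum_of_mem_cubeTop hx]
  rw [b.mem_frontier_convexHull_iff (b.bijOn_cubeTopToSimplex.mapsTo hx)]
  simp only [b.coord_cubeTopToSimplex hx, div_eq_zero_iff, hS, or_false]
  exact and_iff_right hx.1

theorem exists_homeomorph_cubeTop_convexHull :
    ∃ f : cubeTop k ≃ₜ convexHull ℝ (range b),
      ∀ x : cubeTop k, (x : EuclideanSpace ℝ (Fin k)) ∈ cubeBot k ↔
        (f x : E) ∈ frontier (convexHull ℝ (range b)) := by
  obtain ⟨f, hf⟩ := b.bijOn_cubeTopToSimplex.exists_homeomorph b.continuousOn_cubeTopToSimplex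
    (isCompact_cubeTop k)
  exact ⟨f, fun x => by rw [hf]; exact b.mem_cubeBot_iff_cubeTopToSimplex_mem_frontier x.2⟩

end AffineBasis

/-- For `k ≥ 1`, there is a homeomorphism from `∂₊C` (with the subspace topology) onto
the closed unit ball of Euclidean `(k-1)`-space carrying `∂₊C ∩ ∂₋C` onto the unit
sphere `S^{k-2}`.  In particular, collapsing `∂₊C ∩ ∂₋C` inside `∂₊C` yields a
`(k-1)`-sphere. -/
theorem cubeTop_homeo_closedBall (k : ℕ) (hk : 1 ≤ k) :
    ∃ f : ↥(cubeTop k) ≃ₜ ↥(Metric.closedBall (0 : EuclideanSpace ℝ (Fin (k - 1))) 1),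
      ∀ x : ↥(cubeTop k),
        (x : EuclideanSpace ℝ (Fin k)) ∈ cubeBot k ↔
          (f x : EuclideanSpace ℝ (Fin (k - 1))) ∈
            Metric.sphere (0 : EuclideanSpace ℝ (Fin (k - 1))) 1 := by
  obtain ⟨b⟩ : Nonempty (AffineBasis (Fin k) ℝ (EuclideanSpace ℝ (Fin (k - 1)))) :=
    AffineBasis.exists_affineBasis_of_finiteDimensional
      (by rw [Fintype.card_fin, finrank_euclideanSpace_fin]; omega)
  have hfin : (range b).Finite := finite_range b
  obtain ⟨f, hf⟩ := b.exists_homeomorph_cubeTop_convexHull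
  obtain ⟨g, hg⟩ := (convex_convexHull ℝ (range b)).exists_homeomorph_closedBall
    (hfin.isClosed_convexHull ℝ) ⟨_, b.centroid_mem_interior_convexHull⟩
    (hfin.isCompact_convexHull ℝ).isBounded
  exact ⟨f.trans g, fun x => (hf x).trans (hg (f x))⟩
end
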